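/- Let X be a Banach space and let f : X → X be continuously (Fréchet) differentiable. Suppose that for every x ∈ X the derivative f'(x) is an invertible bounded linear operator and that there is a constant M > 0 such that ‖[f'(x)]⁻¹‖ ≤ M for all x ∈ X. Then f is injective: if f(a) = f(b) for a, b ∈ X, then a = b. -/

import Mathlib

/-!
Hadamard's argument by path lifting. Since every `f'(x)` is invertible, `f` is a local
diffeomorphism, hence locally injective. A continuous lift `γ` of a segment `u ↦ p + u • v`
satisfies `γ' = f'(γ)⁻¹ v`, so it is `M ‖v‖`-Lipschitz; therefore the set of `s` for which the
segment lifts over `[0, s]` is open (local inverse function theorem) and closed (a Lipschitz lift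
has a limit in the Banach space), and every segment lifts.

The composition operator `γ ↦ f ∘ γ` on `C([0, 1], X)` satisfies the same hypotheses, its
derivative acting pointwise by `f'(γ t)`. If `f a = f b`, lifting the segment from `f ∘ γ₀`
(`γ₀` the segment from `a` to `b`) to the constant loop at `f a` gives a homotopy whose
endpoint paths and final path are mapped to the single point `f a`; by local injectivity they are
constant, so `a = b`.
-/

open Set Filter Topology Metric NNReal

theorem forall_of_antitone_continuation {P : ℝ → Prop} {a : ℝ} (ha : P a) (hanti : Antitone P)
    (hstep : ∀ s, a ≤ s → P s → ∃ t > s, P t) (hlim : ∀ s, a < s → (∀ t < s, P t) → P s)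
    (s : ℝ) : P s := by
  by_contra hs
  set B := {t | ¬P t}
  have hBa : ∀ t ∈ B, a < t := fun t ht => lt_of_not_ge fun h => ht (hanti h ha)
  have hB : BddBelow B := ⟨a, fun t ht => (hBa t ht).le⟩
  have haT : a ≤ sInf B := le_csInf ⟨s, hs⟩ fun t ht => (hBa t ht).le
  have hT : P (sInf B) := by
    rcases haT.eq_or_lt with h | h
    · exact h ▸ ha
    · exact hlim _ h fun t ht => by_contra fun h => (csInf_le hB h).not_gt ht
  obtain ⟨t, hTt, ht⟩ := hstep _ haT hT
  obtain ⟨b, hb, hbt⟩ := exists_lt_of_csInf_lt ⟨s, hs⟩ hTt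
  exact hb (hanti hbt.le ht)

theorem UniformContinuousOn.exists_tendsto_nhdsWithin {α β : Type*} [PseudoMetricSpace α]
    [PseudoMetricSpace β] [CompleteSpace β] {g : α → β} {S : Set α} {x : α}
    (hg : UniformContinuousOn g S) (hx : x ∈ closure S) : ∃ y, Tendsto g (𝓝[S] x) (𝓝 y) := by
  have := mem_closure_iff_nhdsWithin_neBot.1 hx
  refine CompleteSpace.complete (Metric.cauchy_iff.2 ⟨inferInstance, fun ε hε => ?_⟩)
  obtain ⟨δ, hδ, hgδ⟩ := Metric.uniformContinuousOn_iff.1 hg ε hε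
  refine ⟨g '' (S ∩ ball x (δ / 2)),
    image_mem_map (inter_mem_nhdsWithin S (ball_mem_nhds x (half_pos hδ))), ?_⟩
  rintro _ ⟨a, ⟨haS, ha⟩, rfl⟩ _ ⟨b, ⟨hbS, hb⟩, rfl⟩
  exact hgδ a haS b hbS (by linarith [dist_triangle_right a b x, mem_ball.1 ha, mem_ball.1 hb])

theorem IsCompact.exists_pos_forall_dist_lt {α β : Type*} [PseudoMetricSpace α]
    [PseudoMetricSpace β] {g : α → β} (hg : Continuous g) {S : Set α} (hS : IsCompact S)
    {ε : ℝ} (hε : 0 < ε) : ∃ δ > 0, ∀ x ∈ S, ∀ y, dist y x < δ → dist (g y) (g x) < ε := by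
  obtain ⟨δ, hδ, h⟩ := Metric.mem_uniformity_dist.1
    (hS.uniformContinuousAt_of_continuousAt g (fun x _ => hg.continuousAt)
      (dist_mem_uniformity hε))
  exact ⟨δ, hδ, fun x hx y hxy => dist_comm (g x) (g y) ▸ h (dist_comm y x ▸ hxy) hx⟩

theorem Continuous.continuousLinearEquiv_symm {α : Type*} [TopologicalSpace α]
    {𝕜 : Type*} [NontriviallyNormedField 𝕜]
    {E : Type*} [NormedAddCommGroup E] [NormedSpace 𝕜 E] [CompleteSpace E]
    {e : α → E ≃L[𝕜] E} (he : Continuous fun x => (e x : E →L[𝕜] E)) :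
    Continuous fun x => ((e x).symm : E →L[𝕜] E) := by
  have hinv : ∀ x, ((e x).symm : E →L[𝕜] E) = Ring.inverse (e x : E →L[𝕜] E) := fun x => by
    rw [ContinuousLinearMap.ringInverse_eq_inverse, ContinuousLinearMap.inverse_equiv]
  simp_rw [hinv]
  exact continuous_iff_continuousAt.2 fun x =>
    (NormedRing.inverse_continuousAt (e x).toUnit).comp
      (f := fun y => (e y : E →L[𝕜] E)) he.continuousAt

section InverseFunction

variable {𝕜 : Type*} [NontriviallyNormedField 𝕜]
  {E : Type*} [NormedAddCommGroup E] [NormedSpace 𝕜 E] [CompleteSpace E]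
  {F : Type*} [NormedAddCommGroup F] [NormedSpace 𝕜 F]

theorem isLocalHomeomorph_of_hasStrictFDerivAt_equiv {f : E → F} {f' : E → E ≃L[𝕜] F}
    (hf : ∀ x, HasStrictFDerivAt f (f' x : E →L[𝕜] F) x) : IsLocalHomeomorph f :=
  IsLocalHomeomorph.mk f fun x => ⟨(hf x).toOpenPartialHomeomorph f,
    (hf x).mem_toOpenPartialHomeomorph_source, fun _ _ => rfl⟩

theorem HasStrictFDerivAt.hasDerivWithinAt_of_comp {f : E → F} {f' : E ≃L[𝕜] F} {γ : 𝕜 → E}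
    {s : Set 𝕜} {u : 𝕜} {w : F} (hf : HasStrictFDerivAt f (f' : E →L[𝕜] F) (γ u))
    (hγ : ContinuousWithinAt γ s u) (hfγ : HasDerivWithinAt (f ∘ γ) w s u) :
    HasDerivWithinAt γ (f'.symm w) s u :=
  (hf.to_localInverse.hasFDerivAt.comp_hasDerivWithinAt u hfγ).congr_of_eventuallyEq
    ((hγ.eventually hf.eventually_left_inverse).mono fun _ hv => hv.symm)
    hf.localInverse_apply_image.symm

end InverseFunction

section SegmentLift

variable {E : Type*} [NormedAddCommGroup E] {F : Type*} [NormedAddCommGroup F] [NormedSpace ℝ F]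
  {f : E → F}

def SegmentLiftable (f : E → F) (x₀ : E) (v : F) (s : ℝ) : Prop :=
  ∃ γ : ℝ → E, ContinuousOn γ (Icc 0 s) ∧ γ 0 = x₀ ∧ ∀ u ∈ Icc 0 s, f (γ u) = f x₀ + u • v

variable {x₀ : E} {v : F}

theorem segmentLiftable_zero : SegmentLiftable f x₀ v 0 :=
  ⟨fun _ => x₀, continuousOn_const, rfl, fun u hu => by simp [le_antisymm hu.2 hu.1]⟩

theorem segmentLiftable_antitone : Antitone (SegmentLiftable f x₀ v) :=
  fun _ _ hst ⟨γ, hγc, hγ0, hγf⟩ => ⟨γ, hγc.mono (Icc_subset_Icc_right hst), hγ0,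
    fun u hu => hγf u (Icc_subset_Icc_right hst hu)⟩

variable [CompleteSpace E]

theorem segmentLiftable_of_lipschitzOnWith (hf : Continuous f) {G : ℝ → E} {K : ℝ≥0} {s : ℝ}
    (hs : 0 < s) (hG0 : G 0 = x₀) (hG : LipschitzOnWith K G (Ico 0 s))
    (hGf : ∀ u ∈ Ico 0 s, f (G u) = f x₀ + u • v) : SegmentLiftable f x₀ v s := by
  have hs_mem : s ∈ closure (Ico 0 s) := by rw [closure_Ico hs.ne]; exact right_mem_Icc.2 hs.le
  have := mem_closure_iff_nhdsWithin_neBot.1 hs_mem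
  obtain ⟨y, hy⟩ := hG.uniformContinuousOn.exists_tendsto_nhdsWithin hs_mem
  have hEq : EqOn (Function.update G s y) G (Ico 0 s) := fun u hu =>
    Function.update_of_ne hu.2.ne _ _
  refine ⟨Function.update G s y, fun u hu => ?_, by simp [hs.ne, hG0], fun u hu => ?_⟩
  · rcases hu.2.lt_or_eq with hus | rfl
    · exact ((hG.continuousOn u ⟨hu.1, hus⟩).congr hEq (hEq ⟨hu.1, hus⟩)).mono_of_mem_nhdsWithin
        (mem_of_superset (inter_mem_nhdsWithin _ (Iio_mem_nhds hus)) fun w hw => ⟨hw.1.1, hw.2⟩)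
    · rwa [continuousWithinAt_update_same, Icc_sdiff_right]
  · rcases hu.2.lt_or_eq with hus | rfl
    · rw [hEq ⟨hu.1, hus⟩]; exact hGf u ⟨hu.1, hus⟩
    · rw [Function.update_self]
      refine tendsto_nhds_unique ((hf.tendsto y).comp hy) ?_
      exact (((by fun_prop : Continuous fun u : ℝ => f x₀ + u • v).tendsto u).mono_left
        nhdsWithin_le_nhds).congr' (eventually_mem_nhdsWithin.mono fun w hw => (hGf w hw).symm)

variable [NormedSpace ℝ E] {f' : E → E ≃L[ℝ] F}

theorem lipschitzOnWith_of_apply_eq_add_smul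
    (hf : ∀ x, HasStrictFDerivAt f (f' x : E →L[ℝ] F) x) {M : ℝ≥0}
    (hb : ∀ x, ‖((f' x).symm : F →L[ℝ] E)‖ ≤ M) {p : F} {γ : ℝ → E} {s : Set ℝ}
    (hs : Convex ℝ s) (hγ : ContinuousOn γ s) (hγf : ∀ u ∈ s, f (γ u) = p + u • v) :
    LipschitzOnWith (M * ‖v‖₊) γ s := by
  refine hs.lipschitzOnWith_of_nnnorm_hasDerivWithin_le (f' := fun u => (f' (γ u)).symm v)
    (fun u hu => ?_) fun u _ => ?_
  · refine (hf (γ u)).hasDerivWithinAt_of_comp (hγ u hu) ?_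
    have hline : HasDerivWithinAt (fun u : ℝ => p + u • v) v s u := by
      simpa using ((hasDerivAt_id u).smul_const v).const_add p |>.hasDerivWithinAt
    exact hline.congr_of_mem (fun w hw => hγf w hw) hu
  · rw [← NNReal.coe_le_coe, coe_nnnorm, NNReal.coe_mul, coe_nnnorm]
    exact ContinuousLinearMap.le_of_opNorm_le_of_le _ (hb _) le_rfl

theorem SegmentLiftable.exists_gt (hf : ∀ x, HasStrictFDerivAt f (f' x : E →L[ℝ] F) x) {s : ℝ}
    (hs : 0 ≤ s) (h : SegmentLiftable f x₀ v s) : ∃ t > s, SegmentLiftable f x₀ v t := by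
  obtain ⟨γ, hγc, hγ0, hγf⟩ := h
  set e := (hf (γ s)).toOpenPartialHomeomorph f
  have hsrc : γ s ∈ e.source := (hf (γ s)).mem_toOpenPartialHomeomorph_source
  set ℓ : ℝ → F := fun u => f x₀ + u • v
  have hℓs : e (γ s) = ℓ s := hγf s ⟨hs, le_rfl⟩
  obtain ⟨r, hsr, hr⟩ := exists_Ico_subset_of_mem_nhds
    ((by fun_prop : Continuous ℓ).continuousAt.preimage_mem_nhds
      (e.open_target.mem_nhds (hℓs ▸ e.map_source hsrc))) ⟨s + 1, by linarith⟩
  obtain ⟨t, hst, htr⟩ := exists_between hsr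
  have hℓt : MapsTo ℓ (Icc s t) e.target := (Icc_subset_Ico_right htr).trans hr
  refine ⟨t, hst, fun u => if u ≤ s then γ u else e.symm (ℓ u), ?_, by simp [hs, hγ0], ?_⟩
  · rw [← Icc_union_Icc_eq_Icc hs hst.le]
    refine ContinuousOn.union_of_isClosed ?_ ?_ isClosed_Icc isClosed_Icc
    · exact hγc.congr fun u hu => if_pos hu.2
    · refine (e.continuousOn_symm.comp (by fun_prop) hℓt).congr fun u hu => ?_
      rcases hu.1.eq_or_lt with rfl | hsu
      · simp [← hℓs, e.left_inv hsrc]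
      · simp [not_le.2 hsu]
  · intro u hu
    by_cases hus : u ≤ s
    · simpa [hus] using hγf u ⟨hu.1, hus⟩
    · simp only [hus, if_false]
      exact e.right_inv (hℓt ⟨(not_le.1 hus).le, hu.2⟩)

theorem segmentLiftable_of_forall_lt (hf : ∀ x, HasStrictFDerivAt f (f' x : E →L[ℝ] F) x)
    {M : ℝ≥0} (hb : ∀ x, ‖((f' x).symm : F →L[ℝ] E)‖ ≤ M) {s : ℝ} (hs : 0 < s)
    (h : ∀ t < s, SegmentLiftable f x₀ v t) : SegmentLiftable f x₀ v s := by
  choose! γ hγc hγ0 hγf using h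
  -- lifts starting at `x₀` are unique, so the `γ t` glue to a single lift on `[0, s)`
  have hγγ : ∀ t < s, EqOn (fun u => γ u u) (γ t) (Icc 0 t) := fun t ht u hu =>
    (T2Space.isSeparatedMap f).eqOn_of_comp_eqOn
      (isLocalHomeomorph_of_hasStrictFDerivAt_equiv hf).isLocallyInjective isPreconnected_Icc
      (hγc u (hu.2.trans_lt ht)) ((hγc t ht).mono (Icc_subset_Icc_right hu.2))
      (fun w hw => by
        simp only [Function.comp_apply, hγf u (hu.2.trans_lt ht) w hw,
          hγf t ht w ⟨hw.1, hw.2.trans hu.2⟩])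
      (left_mem_Icc.2 hu.1) (by rw [hγ0 _ (hu.2.trans_lt ht), hγ0 t ht]) ⟨hu.1, le_rfl⟩
  refine segmentLiftable_of_lipschitzOnWith
    (continuous_iff_continuousAt.2 fun x => (hf x).continuousAt) hs (G := fun u => γ u u) (hγ0 0 hs)
    (K := M * ‖v‖₊) (fun x hx y hy => ?_) fun u hu => hγf u hu.2 u ⟨hu.1, le_rfl⟩
  have ht : max x y < s := max_lt hx.2 hy.2
  have hxI : x ∈ Icc 0 (max x y) := ⟨hx.1, le_max_left _ _⟩
  have hyI : y ∈ Icc 0 (max x y) := ⟨hy.1, le_max_right _ _⟩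
  rw [hγγ _ ht hxI, hγγ _ ht hyI]
  exact lipschitzOnWith_of_apply_eq_add_smul hf hb (convex_Icc _ _) (hγc _ ht) (hγf _ ht) hxI hyI

theorem segmentLiftable (hf : ∀ x, HasStrictFDerivAt f (f' x : E →L[ℝ] F) x) {M : ℝ≥0}
    (hb : ∀ x, ‖((f' x).symm : F →L[ℝ] E)‖ ≤ M) (x₀ : E) (v : F) (s : ℝ) :
    SegmentLiftable f x₀ v s :=
  forall_of_antitone_continuation segmentLiftable_zero segmentLiftable_antitone
    (fun _ hs h => h.exists_gt hf hs) (fun _ hs h => segmentLiftable_of_forall_lt hf hb hs h) s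

end SegmentLift

namespace ContinuousMap

variable {K : Type*} [TopologicalSpace K] [CompactSpace K]

section Pointwise

variable {𝕜 : Type*} [NontriviallyNormedField 𝕜]
  {E : Type*} [NormedAddCommGroup E] [NormedSpace 𝕜 E]
  {F : Type*} [NormedAddCommGroup F] [NormedSpace 𝕜 F]

noncomputable def pointwiseCLM (A : C(K, E →L[𝕜] F)) : C(K, E) →L[𝕜] C(K, F) :=
  LinearMap.mkContinuous
    { toFun := fun h => ⟨fun t => A t (h t), by fun_prop⟩
      map_add' := fun _ _ => by ext; simp
      map_smul' := fun _ _ => by ext; simp }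
    ‖A‖ fun h => (ContinuousMap.norm_le _ (by positivity)).2 fun t =>
      (A t).le_of_opNorm_le_of_le (A.norm_coe_le_norm t) (h.norm_coe_le_norm t)

@[simp]
theorem pointwiseCLM_apply (A : C(K, E →L[𝕜] F)) (h : C(K, E)) (t : K) :
    pointwiseCLM A h t = A t (h t) :=
  rfl

theorem norm_pointwiseCLM_le (A : C(K, E →L[𝕜] F)) : ‖pointwiseCLM A‖ ≤ ‖A‖ :=
  LinearMap.mkContinuous_norm_le _ (norm_nonneg A) _

noncomputable def pointwiseCLE (e : K → E ≃L[𝕜] F) (he : Continuous fun t => (e t : E →L[𝕜] F))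
    (he' : Continuous fun t => ((e t).symm : F →L[𝕜] E)) : C(K, E) ≃L[𝕜] C(K, F) :=
  .equivOfInverse (pointwiseCLM ⟨_, he⟩) (pointwiseCLM ⟨_, he'⟩)
    (fun h => by ext; simp) (fun h => by ext; simp)

end Pointwise

variable {E : Type*} [NormedAddCommGroup E] [NormedSpace ℝ E]
  {F : Type*} [NormedAddCommGroup F] [NormedSpace ℝ F]

theorem hasStrictFDerivAt_postcomp (f : C(E, F)) (f' : C(E, E →L[ℝ] F))
    (hf : ∀ x, HasFDerivAt f (f' x) x) (γ : C(K, E)) :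
    HasStrictFDerivAt (fun η : C(K, E) => f.comp η) (pointwiseCLM (f'.comp γ)) γ := by
  rw [hasStrictFDerivAt_iff_isLittleO, Asymptotics.isLittleO_iff]
  intro c hc
  obtain ⟨δ, hδ, hf'δ⟩ := (isCompact_range γ.continuous).exists_pos_forall_dist_lt f'.continuous hc
  have hball : ∀ η ∈ ball γ δ, ∀ t, η t ∈ ball (γ t) δ := fun η hη t =>
    (dist_apply_le_dist t).trans_lt hη
  filter_upwards [continuousAt_fst.eventually_mem (ball_mem_nhds γ hδ),
    continuousAt_snd.eventually_mem (ball_mem_nhds γ hδ)] with p hp₁ hp₂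
  refine (ContinuousMap.norm_le _ (by positivity)).2 fun t => ?_
  set g : E → F := fun z => f z - f' (γ t) z
  calc ‖(f.comp p.1 - f.comp p.2 - pointwiseCLM (f'.comp γ) (p.1 - p.2)) t‖
      = ‖g (p.1 t) - g (p.2 t)‖ := by simp only [g, map_sub]; congr 1; simp; abel
    _ ≤ c * ‖p.1 t - p.2 t‖ :=
      (convex_ball (γ t) δ).norm_image_sub_le_of_norm_hasFDerivWithin_le
        (fun z _ => ((hf z).sub (f' (γ t)).hasFDerivAt).hasFDerivWithinAt)
        (fun z hz => by
          simpa [dist_eq_norm] using (hf'δ _ (mem_range_self t) z hz).le)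
        (hball _ hp₂ t) (hball _ hp₁ t)
    _ ≤ c * ‖p.1 - p.2‖ := by gcongr; exact (p.1 - p.2).norm_coe_le_norm t

end ContinuousMap

theorem exists_lift_straightLineHomotopy {K X : Type*} [TopologicalSpace K] [CompactSpace K]
    [NormedAddCommGroup X] [NormedSpace ℝ X] [CompleteSpace X] {f : X → X}
    {φ : X → X ≃L[ℝ] X} {M : ℝ≥0} (hdf : ∀ x, HasFDerivAt f (φ x : X →L[ℝ] X) x)
    (hcont : Continuous fun x => (φ x : X →L[ℝ] X))
    (hbound : ∀ x, ‖((φ x).symm : X →L[ℝ] X)‖ ≤ M) (γ₀ δ : C(K, X)) :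
    ∃ Γ : ℝ → C(K, X), ContinuousOn Γ (Icc 0 1) ∧ Γ 0 = γ₀ ∧
      ∀ u ∈ Icc (0 : ℝ) 1, ∀ t, f (Γ u t) = AffineMap.lineMap (f (γ₀ t)) (δ t) u := by
  have hfc : Continuous f := continuous_iff_continuousAt.2 fun x => (hdf x).continuousAt
  let Φ : C(K, X) → C(K, X) ≃L[ℝ] C(K, X) := fun γ =>
    ContinuousMap.pointwiseCLE (fun t => φ (γ t)) (hcont.comp γ.continuous)
      (hcont.continuousLinearEquiv_symm.comp γ.continuous)
  have hΦ : ∀ γ, HasStrictFDerivAt (fun η : C(K, X) => (⟨f, hfc⟩ : C(X, X)).comp η)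
      (Φ γ : C(K, X) →L[ℝ] C(K, X)) γ :=
    ContinuousMap.hasStrictFDerivAt_postcomp ⟨f, hfc⟩ ⟨fun x => φ x, hcont⟩ hdf
  have hΦb : ∀ γ, ‖((Φ γ).symm : C(K, X) →L[ℝ] C(K, X))‖ ≤ M := fun γ =>
    (ContinuousMap.norm_pointwiseCLM_le _).trans
      ((ContinuousMap.norm_le _ M.coe_nonneg).2 fun _ => hbound _)
  obtain ⟨Γ, hΓc, hΓ0, hΓf⟩ := segmentLiftable hΦ hΦb γ₀ (δ - (⟨f, hfc⟩ : C(X, X)).comp γ₀) 1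
  refine ⟨Γ, hΓc, hΓ0, fun u hu t => ?_⟩
  rw [AffineMap.lineMap_apply_module', add_comm]
  simpa using congr($(hΓf u hu) t)

open unitInterval in
theorem IsLocallyInjective.eq_of_lift_homotopy {X Z : Type*} [TopologicalSpace X] [T2Space X]
    [TopologicalSpace Z] {f : X → Z} (hf : IsLocallyInjective f) {Γ : ℝ → C(I, X)}
    (hΓ : ContinuousOn Γ (Icc 0 1)) {z : Z}
    (hends : ∀ u ∈ Icc (0 : ℝ) 1, ∀ t ∈ ({0, 1} : Set I), f (Γ u t) = z)
    (htop : ∀ t, f (Γ 1 t) = z) : Γ 0 0 = Γ 0 1 := by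
  have hsep := T2Space.isSeparatedMap f
  have hside : ∀ t ∈ ({0, 1} : Set I), Γ 0 t = Γ 1 t := fun t ht =>
    hsep.constOn_of_comp hf isPreconnected_Icc ((continuous_eval_const t).comp_continuousOn hΓ)
      (fun u hu u' hu' => by simp only [Function.comp_apply, hends u hu t ht, hends u' hu' t ht])
      (left_mem_Icc.2 zero_le_one) (right_mem_Icc.2 zero_le_one)
  calc Γ 0 0 = Γ 1 0 := hside 0 (by simp)
    _ = Γ 1 1 := hsep.const_of_comp hf (Γ 1).continuous (fun t t' => by rw [htop, htop]) 0 1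
    _ = Γ 0 1 := (hside 1 (by simp)).symm

/-- Under Hadamard's hypotheses, `f` is injective. -/
theorem hadamard_injective
    {X : Type*} [NormedAddCommGroup X] [NormedSpace ℝ X] [CompleteSpace X]
    (f : X → X) (φ : X → X ≃L[ℝ] X) (M : ℝ) (hM : 0 < M)
    (hdf : ∀ x, HasFDerivAt f (φ x : X →L[ℝ] X) x)
    (hcont : Continuous fun x => (φ x : X →L[ℝ] X))
    (hbound : ∀ x, ‖((φ x).symm : X →L[ℝ] X)‖ ≤ M) :
    Function.Injective f := by
  intro a b hab
  have hinj : IsLocallyInjective f :=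
    (isLocalHomeomorph_of_hasStrictFDerivAt_equiv fun _ =>
      hasStrictFDerivAt_of_hasFDerivAt_of_continuousAt (.of_forall hdf)
        hcont.continuousAt).isLocallyInjective
  let γ₀ : C(unitInterval, X) := ⟨fun t => AffineMap.lineMap a b (t : ℝ), by fun_prop⟩
  obtain ⟨Γ, hΓc, hΓ0, hΓf⟩ := exists_lift_straightLineHomotopy (M := ⟨M, hM.le⟩) hdf hcont hbound
    γ₀ (.const _ (f a))
  have := hinj.eq_of_lift_homotopy hΓc (z := f a)
    (by rintro u hu t (rfl | rfl) <;> simp [hΓf u hu, γ₀, hab])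
    (fun t => by simp [hΓf 1 (right_mem_Icc.2 zero_le_one)])
  simpa [hΓ0, γ₀] using this
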